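/- Let β̂ := σᵤ/√(ΔΣ₀). There exists ε > 0 such that for every starting value β⁽⁰⁾ ∈ ℝ with β⁽⁰⁾ ≠ 0 and 0 < |β⁽⁰⁾ − β̂| < ε, the sequence defined by β⁽ᵐ⁺¹⁾ := T(β⁽ᵐ⁾) is well defined (all iterates are nonzero) and converges to β̂ as m → ∞. -/
import Mathlib


open Filter

/-- The one-period policy-iteration map `T(β) = (β² Sig0 Δ + σu²)/(2 Δ β Sig0)`. -/
noncomputable def T1p (Δ σu Sig0 β : ℝ) : ℝ :=
  (β ^ 2 * Sig0 * Δ + σu ^ 2) / (2 * Δ * β * Sig0)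

/-- Local stability for one trading period: with `β̂ := σu/√(Δ Sig0)` there exists
`ε > 0` such that for every starting value `β⁰ ≠ 0` with `0 < |β⁰ - β̂| < ε`,
all iterates `β⁽ᵐ⁾ := T^[m] β⁰` are nonzero and `β⁽ᵐ⁾ → β̂` as `m → ∞`. -/
theorem one_period_locally_stable (Δ σu Sig0 : ℝ) (hΔ : 0 < Δ) (hσ : 0 < σu)
    (hSig : 0 < Sig0) :
    ∃ ε > 0, ∀ β0 : ℝ, β0 ≠ 0 →
      0 < |β0 - σu / Real.sqrt (Δ * Sig0)| →
      |β0 - σu / Real.sqrt (Δ * Sig0)| < ε →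
      (∀ m : ℕ, (T1p Δ σu Sig0)^[m] β0 ≠ 0) ∧
      Tendsto (fun m : ℕ => (T1p Δ σu Sig0)^[m] β0) atTop
        (nhds (σu / Real.sqrt (Δ * Sig0))) := by
  set b : ℝ := σu / Real.sqrt (Δ * Sig0) with hb
  have hΔS : 0 < Δ * Sig0 := mul_pos hΔ hSig
  have hsq : Real.sqrt (Δ * Sig0) > 0 := Real.sqrt_pos.mpr hΔS
  have hbpos : 0 < b := div_pos hσ hsq
  have hb2 : b ^ 2 * (Δ * Sig0) = σu ^ 2 := by
    rw [hb, div_pow, Real.sq_sqrt hΔS.le]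
    field_simp
  -- key identity
  have hT : ∀ β : ℝ, β ≠ 0 → T1p Δ σu Sig0 β = b + (β - b) ^ 2 / (2 * β) := by
    intro β hβ
    rw [T1p, ← hb2]
    field_simp
    ring
  refine ⟨b / 2, by positivity, fun β0 hβ0 _hpos hlt => ?_⟩
  -- main invariant
  have key : ∀ m : ℕ, 0 < (T1p Δ σu Sig0)^[m] β0 ∧
      |(T1p Δ σu Sig0)^[m] β0 - b| ≤ b / 2 * (1 / 2) ^ m := by
    intro m
    induction m with
    | zero =>
      refine ⟨?_, by simpa using hlt.le⟩
      have := abs_lt.mp hlt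
      simp only [Function.iterate_zero_apply]
      linarith [this.1]
    | succ n ih =>
      obtain ⟨hpos, hbd⟩ := ih
      set x := (T1p Δ σu Sig0)^[n] β0 with hx
      have hp1 : (1 / 2 : ℝ) ^ n ≤ 1 := pow_le_one₀ (by norm_num) (by norm_num)
      have hxb : b / 2 ≤ x := by
        have h2 : b / 2 * (1 / 2) ^ n ≤ b / 2 := by nlinarith
        have := abs_le.mp (hbd.trans h2)
        linarith [this.1]
      have hiter : (T1p Δ σu Sig0)^[n + 1] β0 = b + (x - b) ^ 2 / (2 * x) := by
        rw [Function.iterate_succ_apply', ← hx, hT x hpos.ne']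
      constructor
      · rw [hiter]
        have h0 : 0 ≤ (x - b) ^ 2 / (2 * x) := by positivity
        linarith
      · rw [hiter]
        have habs : |b + (x - b) ^ 2 / (2 * x) - b| = (x - b) ^ 2 / (2 * x) := by
          rw [show b + (x - b) ^ 2 / (2 * x) - b = (x - b) ^ 2 / (2 * x) by ring]
          exact abs_of_nonneg (by positivity)
        rw [habs, div_le_iff₀ (by positivity : (0:ℝ) < 2 * x)]
        have hpb : b / 2 * (1 / 2) ^ n ≤ x := by nlinarith
        have h6 : |x - b| * |x - b| ≤ b / 2 * (1 / 2) ^ n * x :=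
          mul_le_mul hbd (hbd.trans hpb) (abs_nonneg _) (by positivity)
        calc (x - b) ^ 2 = |x - b| * |x - b| := by rw [← sq_abs]; ring
          _ ≤ b / 2 * (1 / 2) ^ n * x := h6
          _ = b / 2 * (1 / 2) ^ (n + 1) * (2 * x) := by rw [pow_succ]; ring
  refine ⟨fun m => (key m).1.ne', ?_⟩
  have h0 : Tendsto (fun m : ℕ => (T1p Δ σu Sig0)^[m] β0 - b) atTop (nhds 0) := by
    rw [tendsto_zero_iff_abs_tendsto_zero]
    apply squeeze_zero (fun m => abs_nonneg _) (fun m => (key m).2)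
    have := tendsto_pow_atTop_nhds_zero_of_lt_one (by norm_num : (0:ℝ) ≤ 1/2) (by norm_num : (1/2:ℝ) < 1)
    simpa using this.const_mul (b / 2)
  have := h0.add_const b
  simpa using this
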